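/- arXiv:1808.06375 — 6 statements merged into one kernel-verified Lean document; each statement's English description precedes it below -/
import Mathlib

section
/- If L_H has constant row sums for a free-form Sudoku puzzle, then there is a common number k such that every block having at least one cell in a given row has exactly k cells in that row. -/
/-- If `L_H` has constant row sums for a free-form Sudoku puzzle, then there is a common
number `k` such that every block having at least one cell in a given row has exactly `k`
cells in that row. -/
theorem constant_row_sums_block_row_intersections (m : ℕ)
    (block : Fin m × Fin m → Fin m)
    (hT : ∀ b : Fin m, (Finset.univ.filter fun c : Fin m × Fin m => block c = b).card = m)
    (LH : Matrix (Fin m × Fin m) (Fin m × Fin m) ℝ)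
    (hH : ∀ u v : Fin m × Fin m,
      LH u v = if u.1 = v.1 ∧ block u ≠ block v then 1 else 0)
    (hconst : ∃ c : ℝ, ∀ u, ∑ v, LH u v = c) :
    ∃ k : ℕ, ∀ i b : Fin m,
      0 < (Finset.univ.filter fun c : Fin m × Fin m => c.1 = i ∧ block c = b).card →
      (Finset.univ.filter fun c : Fin m × Fin m => c.1 = i ∧ block c = b).card = k := by
  obtain ⟨c, hc⟩ := hconst
  -- the row sum at u counts cells in the same row but different block
  have hsum : ∀ u : Fin m × Fin m,
      ∑ v, LH u v =
        ((Finset.univ.filter fun v : Fin m × Fin m =>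
          v.1 = u.1 ∧ block v ≠ block u).card : ℝ) := by
    intro u
    rw [Finset.card_filter]
    push_cast
    apply Finset.sum_congr rfl
    intro v _
    rw [hH]
    by_cases h : v.1 = u.1 ∧ block v ≠ block u
    · rw [if_pos ⟨h.1.symm, Ne.symm h.2⟩, if_pos h]
    · rw [if_neg (fun h' => h ⟨h'.1.symm, Ne.symm h'.2⟩), if_neg h]
  -- each row has m cells
  have hrow : ∀ i : Fin m,
      (Finset.univ.filter fun v : Fin m × Fin m => v.1 = i).card = m := by
    intro i
    have : (Finset.univ.filter fun v : Fin m × Fin m => v.1 = i)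
        = {i} ×ˢ Finset.univ := by
      ext ⟨a, b⟩
      simp [Prod.ext_iff, eq_comm]
    rw [this]
    simp
  -- card of same-row-different-block plus same-row-same-block is m
  have hsplit : ∀ u : Fin m × Fin m,
      (Finset.univ.filter fun v : Fin m × Fin m =>
          v.1 = u.1 ∧ block v ≠ block u).card
      + (Finset.univ.filter fun v : Fin m × Fin m =>
          v.1 = u.1 ∧ block v = block u).card = m := by
    intro u
    have h := Finset.card_filter_add_card_filter_not
      (s := Finset.univ.filter fun v : Fin m × Fin m => v.1 = u.1)
      (p := fun v => block v ≠ block u)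
    rw [Finset.filter_filter, Finset.filter_filter, hrow u.1] at h
    simpa [not_not] using h
  -- the same-row-same-block count is the same for all cells
  have hkey : ∀ u w : Fin m × Fin m,
      (Finset.univ.filter fun v : Fin m × Fin m =>
          v.1 = u.1 ∧ block v = block u).card
      = (Finset.univ.filter fun v : Fin m × Fin m =>
          v.1 = w.1 ∧ block v = block w).card := by
    intro u w
    have h1 := hc u
    have h2 := hc w
    rw [hsum] at h1 h2
    have hne : (Finset.univ.filter fun v : Fin m × Fin m =>
          v.1 = u.1 ∧ block v ≠ block u).card
        = (Finset.univ.filter fun v : Fin m × Fin m =>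
          v.1 = w.1 ∧ block v ≠ block w).card := by
      exact_mod_cast h1.trans h2.symm
    have hu := hsplit u
    have hw := hsplit w
    omega
  by_cases hm : m = 0
  · exact ⟨0, fun i => absurd i.isLt (by omega)⟩
  have hm' : 0 < m := Nat.pos_of_ne_zero hm
  refine ⟨(Finset.univ.filter fun v : Fin m × Fin m =>
    v.1 = (⟨0, hm'⟩ : Fin m)
      ∧ block v = block (⟨0, hm'⟩, ⟨0, hm'⟩)).card,
    fun i b hpos => ?_⟩
  obtain ⟨u, hu⟩ := Finset.card_pos.mp hpos
  simp only [Finset.mem_filter] at hu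
  obtain ⟨-, hu1, hu2⟩ := hu
  have : (Finset.univ.filter fun c : Fin m × Fin m => c.1 = i ∧ block c = b)
      = Finset.univ.filter fun v : Fin m × Fin m => v.1 = u.1 ∧ block v = block u := by
    rw [hu1, hu2]
  rw [this]
  exact hkey u ((⟨0, hm'⟩ : Fin m), (⟨0, hm'⟩ : Fin m))
end

section
/- Suppose a free-form Sudoku puzzle satisfies: (i) there is q such that every cell has exactly q cells (including itself) in the same row and same block; (ii) the analogous condition with columns; (iii) for any two cells C1, C2 in different rows and columns, the cell in the row of C1 and column of C2 lies in the same block as C1 if and only if the cell in the column of C1 and row of C2 lies in the same block as C1. Then all eigenvalues of the adjacency matrix of FSud(m,T) are integers. -/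
open Finset

section SudokuAux

lemma sudoku_cnt_iff {α : Type*} [Fintype α] {p q : α → Prop}
    [DecidablePred p] [DecidablePred q] (h : ∀ w, p w ↔ q w) :
    (Finset.univ.filter p).card = (Finset.univ.filter q).card := by
  have : Finset.univ.filter p = Finset.univ.filter q := by
    ext w; simp [h w]
  rw [this]

variable {m : ℕ} (block : Fin m × Fin m → Fin m)
  (hT : ∀ b : Fin m, (Finset.univ.filter fun c : Fin m × Fin m => block c = b).card = m)
  (hmix : ∀ C1 C2 : Fin m × Fin m, C1.1 ≠ C2.1 → C1.2 ≠ C2.2 →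
      (block (C1.1, C2.2) = block C1 ↔ block (C2.1, C1.2) = block C1))

include hT hmix

/-- key: same row and same block forces equality -/
lemma sudoku_row_unique (u w : Fin m × Fin m) (h1 : w.1 = u.1) (hb : block w = block u) :
    w = u := by
  by_contra hne
  have h2 : w.2 ≠ u.2 := fun h => hne (Prod.ext h1 h)
  have hall : ∀ r2 : Fin m, block (r2, u.2) = block u := by
    intro r2
    by_cases hr2 : r2 = u.1
    · subst hr2; rw [Prod.mk.eta]
    · have := hmix u (r2, w.2) (fun h => hr2 h.symm) (fun h => h2 h.symm)
      refine this.mp ?_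
      have : (u.1, w.2) = w := by rw [← h1]
      rw [this, hb]
  have hsub : insert w ((Finset.univ : Finset (Fin m)).image fun r => (r, u.2)) ⊆
      (Finset.univ.filter fun c : Fin m × Fin m => block c = block u) := by
    intro x hx
    simp only [mem_insert, mem_image, mem_univ, true_and] at hx
    simp only [mem_filter, mem_univ, true_and]
    rcases hx with rfl | ⟨r, rfl⟩
    · exact hb
    · exact hall r
  have hcard := Finset.card_le_card hsub
  rw [hT, Finset.card_insert_of_notMem, Finset.card_image_of_injective _
      (fun a b h => (Prod.mk.injEq _ _ _ _).mp h |>.1), Finset.card_univ,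
      Fintype.card_fin] at hcard
  · omega
  · intro hmem
    simp only [mem_image, mem_univ, true_and] at hmem
    obtain ⟨r, hr⟩ := hmem
    exact h2 (by rw [← hr])

lemma sudoku_col_unique (u w : Fin m × Fin m) (h1 : w.2 = u.2) (hb : block w = block u) :
    w = u := by
  by_contra hne
  have h2 : w.1 ≠ u.1 := fun h => hne (Prod.ext h h1)
  have hall : ∀ c2 : Fin m, block (u.1, c2) = block u := by
    intro c2
    by_cases hc2 : c2 = u.2
    · subst hc2; rw [Prod.mk.eta]
    · have := hmix u (w.1, c2) (fun h => h2 h.symm) (fun h => hc2 h.symm)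
      refine this.mpr ?_
      have : (w.1, u.2) = w := by rw [← h1]
      rw [this, hb]
  have hsub : insert w ((Finset.univ : Finset (Fin m)).image fun c => (u.1, c)) ⊆
      (Finset.univ.filter fun c : Fin m × Fin m => block c = block u) := by
    intro x hx
    simp only [mem_insert, mem_image, mem_univ, true_and] at hx
    simp only [mem_filter, mem_univ, true_and]
    rcases hx with rfl | ⟨c, rfl⟩
    · exact hb
    · exact hall c
  have hcard := Finset.card_le_card hsub
  rw [hT, Finset.card_insert_of_notMem, Finset.card_image_of_injective _
      (fun a b h => (Prod.mk.injEq _ _ _ _).mp h |>.2), Finset.card_univ,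
      Fintype.card_fin] at hcard
  · omega
  · intro hmem
    simp only [mem_image, mem_univ, true_and] at hmem
    obtain ⟨c, hc⟩ := hmem
    exact h2 (by rw [← hc])

/-- each block meets each row exactly once -/
lemma sudoku_cnt_row_block (r b : Fin m) :
    (Finset.univ.filter fun w : Fin m × Fin m => w.1 = r ∧ block w = b).card = 1 := by
  have hinj : Function.Injective (fun c : Fin m => block (r, c)) := by
    intro c c' h
    have := sudoku_row_unique block hT hmix (r, c) (r, c') rfl h.symm
    exact (((Prod.mk.injEq _ _ _ _).mp this).2).symm
  obtain ⟨c, hc'⟩ := (Finite.injective_iff_surjective.mp hinj) b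
  have hc : block (r, c) = b := hc'
  rw [Finset.card_eq_one]
  refine ⟨(r, c), ?_⟩
  ext w
  simp only [mem_filter, mem_univ, true_and, mem_singleton]
  constructor
  · rintro ⟨h1, h2⟩
    have hw : w = (r, w.2) := by rw [← h1]
    rw [hw]
    have : block (r, w.2) = block (r, c) := by rw [← hw, h2, hc]
    rw [hinj this]
  · rintro rfl; exact ⟨rfl, hc⟩

/-- each block meets each column exactly once -/
lemma sudoku_cnt_col_block (c b : Fin m) :
    (Finset.univ.filter fun w : Fin m × Fin m => w.2 = c ∧ block w = b).card = 1 := by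
  have hinj : Function.Injective (fun r : Fin m => block (r, c)) := by
    intro r r' h
    have := sudoku_col_unique block hT hmix (r, c) (r', c) rfl h.symm
    exact (((Prod.mk.injEq _ _ _ _).mp this).1).symm
  obtain ⟨r, hr'⟩ := (Finite.injective_iff_surjective.mp hinj) b
  have hr : block (r, c) = b := hr'
  rw [Finset.card_eq_one]
  refine ⟨(r, c), ?_⟩
  ext w
  simp only [mem_filter, mem_univ, true_and, mem_singleton]
  constructor
  · rintro ⟨h1, h2⟩
    have hw : w = (w.1, c) := by rw [← h1]
    rw [hw]
    have : block (w.1, c) = block (r, c) := by rw [← hw, h2, hr]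
    rw [hinj this]
  · rintro rfl; exact ⟨rfl, hr⟩

end SudokuAux

lemma sudoku_cnt_fst (m : ℕ) (r : Fin m) :
    (Finset.univ.filter fun w : Fin m × Fin m => w.1 = r).card = m := by
  have : (Finset.univ.filter fun w : Fin m × Fin m => w.1 = r)
      = Finset.univ.image fun c : Fin m => (r, c) := by
    ext w
    simp only [mem_filter, mem_univ, true_and, mem_image]
    constructor
    · intro h; exact ⟨w.2, by rw [← h]⟩
    · rintro ⟨c, rfl⟩; rfl
  rw [this, Finset.card_image_of_injective _ (fun a b h => (Prod.mk.injEq _ _ _ _).mp h |>.2),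
    Finset.card_univ, Fintype.card_fin]

lemma sudoku_cnt_snd (m : ℕ) (c : Fin m) :
    (Finset.univ.filter fun w : Fin m × Fin m => w.2 = c).card = m := by
  have : (Finset.univ.filter fun w : Fin m × Fin m => w.2 = c)
      = Finset.univ.image fun r : Fin m => (r, c) := by
    ext w
    simp only [mem_filter, mem_univ, true_and, mem_image]
    constructor
    · intro h; exact ⟨w.1, by rw [← h]⟩
    · rintro ⟨r, rfl⟩; rfl
  rw [this, Finset.card_image_of_injective _ (fun a b h => (Prod.mk.injEq _ _ _ _).mp h |>.1),
    Finset.card_univ, Fintype.card_fin]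

lemma sudoku_cnt_point (m : ℕ) (r c : Fin m) :
    (Finset.univ.filter fun w : Fin m × Fin m => w.1 = r ∧ w.2 = c).card = 1 := by
  rw [Finset.card_eq_one]
  refine ⟨(r, c), ?_⟩
  ext w
  simp only [mem_filter, mem_univ, true_and, mem_singleton]
  constructor
  · rintro ⟨h1, h2⟩; exact Prod.ext h1 h2
  · rintro rfl; exact ⟨rfl, rfl⟩

/-- Integrality of free-form Sudoku graphs under conditions (i), (ii), (iii). -/
theorem free_form_sudoku_integral (m : ℕ)
    (block : Fin m × Fin m → Fin m)
    (hT : ∀ b : Fin m, (Finset.univ.filter fun c : Fin m × Fin m => block c = b).card = m)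
    -- (i): each cell has exactly q cells (including itself) in the same row and same block
    (hrow : ∃ q : ℕ, ∀ u : Fin m × Fin m,
      (Finset.univ.filter fun v : Fin m × Fin m => v.1 = u.1 ∧ block v = block u).card = q)
    -- (ii): each cell has exactly q' cells (including itself) in the same column and same block
    (hcol : ∃ q : ℕ, ∀ u : Fin m × Fin m,
      (Finset.univ.filter fun v : Fin m × Fin m => v.2 = u.2 ∧ block v = block u).card = q)
    -- (iii)
    (hmix : ∀ C1 C2 : Fin m × Fin m, C1.1 ≠ C2.1 → C1.2 ≠ C2.2 →
      (block (C1.1, C2.2) = block C1 ↔ block (C2.1, C1.2) = block C1))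
    (A : Matrix (Fin m × Fin m) (Fin m × Fin m) ℝ)
    (hA : ∀ u v : Fin m × Fin m,
      A u v = if u ≠ v ∧ (u.1 = v.1 ∨ u.2 = v.2 ∨ block u = block v) then 1 else 0) :
    ∀ μ ∈ spectrum ℝ A, ∃ z : ℤ, μ = (z : ℝ) := by
  classical
  set Rm : Matrix (Fin m × Fin m) (Fin m × Fin m) ℝ := Matrix.of fun u v => if u.1 = v.1 then 1 else 0 with hRm
  set Cm : Matrix (Fin m × Fin m) (Fin m × Fin m) ℝ := Matrix.of fun u v => if u.2 = v.2 then 1 else 0 with hCm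
  set Bm : Matrix (Fin m × Fin m) (Fin m × Fin m) ℝ := Matrix.of fun u v => if block u = block v then 1 else 0 with hBm
  set Jm : Matrix (Fin m × Fin m) (Fin m × Fin m) ℝ := Matrix.of fun _ _ => 1 with hJm
  -- product identities
  have h1 : Rm * Rm = (m : ℝ) • Rm := by
    ext u v
    simp only [hRm, Matrix.mul_apply, Matrix.of_apply, Matrix.smul_apply, smul_eq_mul,
      ite_mul, one_mul, zero_mul, ← ite_and, Finset.sum_boole]
    by_cases h : u.1 = v.1
    · rw [sudoku_cnt_iff (q := fun w : Fin m × Fin m => w.1 = u.1)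
        (fun w => ⟨fun hw => hw.1.symm, fun hw => ⟨hw.symm, hw.trans h⟩⟩), sudoku_cnt_fst]
      simp [h]
    · rw [sudoku_cnt_iff (q := fun _ : Fin m × Fin m => False)
        (fun w => ⟨fun hw => h (hw.1.trans hw.2), False.elim⟩)]
      simp [h]
  have h2 : Cm * Cm = (m : ℝ) • Cm := by
    ext u v
    simp only [hCm, Matrix.mul_apply, Matrix.of_apply, Matrix.smul_apply, smul_eq_mul,
      ite_mul, one_mul, zero_mul, ← ite_and, Finset.sum_boole]
    by_cases h : u.2 = v.2
    · rw [sudoku_cnt_iff (q := fun w : Fin m × Fin m => w.2 = u.2)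
        (fun w => ⟨fun hw => hw.1.symm, fun hw => ⟨hw.symm, hw.trans h⟩⟩), sudoku_cnt_snd]
      simp [h]
    · rw [sudoku_cnt_iff (q := fun _ : Fin m × Fin m => False)
        (fun w => ⟨fun hw => h (hw.1.trans hw.2), False.elim⟩)]
      simp [h]
  have h3 : Bm * Bm = (m : ℝ) • Bm := by
    ext u v
    simp only [hBm, Matrix.mul_apply, Matrix.of_apply, Matrix.smul_apply, smul_eq_mul,
      ite_mul, one_mul, zero_mul, ← ite_and, Finset.sum_boole]
    by_cases h : block u = block v
    · rw [sudoku_cnt_iff (q := fun w : Fin m × Fin m => block w = block u)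
        (fun w => ⟨fun hw => hw.1.symm, fun hw => ⟨hw.symm, hw.trans h⟩⟩), hT]
      simp [h]
    · rw [sudoku_cnt_iff (q := fun _ : Fin m × Fin m => False)
        (fun w => ⟨fun hw => h (hw.1.trans hw.2), False.elim⟩)]
      simp [h]
  have h4 : Rm * Cm = Jm := by
    ext u v
    simp only [hRm, hCm, hJm, Matrix.mul_apply, Matrix.of_apply,
      ite_mul, one_mul, zero_mul, ← ite_and, Finset.sum_boole]
    rw [sudoku_cnt_iff (q := fun w : Fin m × Fin m => w.1 = u.1 ∧ w.2 = v.2)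
      (fun w => ⟨fun hw => ⟨hw.1.symm, hw.2⟩, fun hw => ⟨hw.1.symm, hw.2⟩⟩),
      sudoku_cnt_point]
    norm_num
  have h5 : Cm * Rm = Jm := by
    ext u v
    simp only [hRm, hCm, hJm, Matrix.mul_apply, Matrix.of_apply,
      ite_mul, one_mul, zero_mul, ← ite_and, Finset.sum_boole]
    rw [sudoku_cnt_iff (q := fun w : Fin m × Fin m => w.1 = v.1 ∧ w.2 = u.2)
      (fun w => ⟨fun hw => ⟨hw.2, hw.1.symm⟩, fun hw => ⟨hw.2.symm, hw.1⟩⟩),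
      sudoku_cnt_point]
    norm_num
  have h6 : Rm * Bm = Jm := by
    ext u v
    simp only [hRm, hBm, hJm, Matrix.mul_apply, Matrix.of_apply,
      ite_mul, one_mul, zero_mul, ← ite_and, Finset.sum_boole]
    rw [sudoku_cnt_iff (q := fun w : Fin m × Fin m => w.1 = u.1 ∧ block w = block v)
      (fun w => ⟨fun hw => ⟨hw.1.symm, hw.2⟩, fun hw => ⟨hw.1.symm, hw.2⟩⟩),
      sudoku_cnt_row_block block hT hmix]
    norm_num
  have h7 : Bm * Rm = Jm := by
    ext u v
    simp only [hRm, hBm, hJm, Matrix.mul_apply, Matrix.of_apply,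
      ite_mul, one_mul, zero_mul, ← ite_and, Finset.sum_boole]
    rw [sudoku_cnt_iff (q := fun w : Fin m × Fin m => w.1 = v.1 ∧ block w = block u)
      (fun w => ⟨fun hw => ⟨hw.2, hw.1.symm⟩, fun hw => ⟨hw.2.symm, hw.1⟩⟩),
      sudoku_cnt_row_block block hT hmix]
    norm_num
  have h8 : Cm * Bm = Jm := by
    ext u v
    simp only [hCm, hBm, hJm, Matrix.mul_apply, Matrix.of_apply,
      ite_mul, one_mul, zero_mul, ← ite_and, Finset.sum_boole]
    rw [sudoku_cnt_iff (q := fun w : Fin m × Fin m => w.2 = u.2 ∧ block w = block v)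
      (fun w => ⟨fun hw => ⟨hw.1.symm, hw.2⟩, fun hw => ⟨hw.1.symm, hw.2⟩⟩),
      sudoku_cnt_col_block block hT hmix]
    norm_num
  have h9 : Bm * Cm = Jm := by
    ext u v
    simp only [hCm, hBm, hJm, Matrix.mul_apply, Matrix.of_apply,
      ite_mul, one_mul, zero_mul, ← ite_and, Finset.sum_boole]
    rw [sudoku_cnt_iff (q := fun w : Fin m × Fin m => w.2 = v.2 ∧ block w = block u)
      (fun w => ⟨fun hw => ⟨hw.2, hw.1.symm⟩, fun hw => ⟨hw.2.symm, hw.1⟩⟩),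
      sudoku_cnt_col_block block hT hmix]
    norm_num
  have h10 : Jm * Rm = (m : ℝ) • Jm := by
    ext u v
    simp only [hRm, hJm, Matrix.mul_apply, Matrix.of_apply, Matrix.smul_apply, smul_eq_mul,
      one_mul, Finset.sum_boole]
    rw [sudoku_cnt_fst]
    norm_num
  have h11 : Jm * Cm = (m : ℝ) • Jm := by
    ext u v
    simp only [hCm, hJm, Matrix.mul_apply, Matrix.of_apply, Matrix.smul_apply, smul_eq_mul,
      one_mul, Finset.sum_boole]
    rw [sudoku_cnt_snd]
    norm_num
  have h12 : Jm * Bm = (m : ℝ) • Jm := by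
    ext u v
    simp only [hBm, hJm, Matrix.mul_apply, Matrix.of_apply, Matrix.smul_apply, smul_eq_mul,
      one_mul, Finset.sum_boole]
    rw [sudoku_cnt_iff (q := fun w : Fin m × Fin m => block w = block v) (fun w => Iff.rfl), hT]
    norm_num
  -- decomposition of A
  have hA' : A = Rm + Cm + Bm - (3 : ℝ) • 1 := by
    ext u v
    rw [hA u v]
    simp only [hRm, hCm, hBm, Matrix.sub_apply, Matrix.add_apply, Matrix.smul_apply,
      Matrix.of_apply, Matrix.one_apply, smul_eq_mul]
    by_cases huv : u = v
    · subst huv; simp; norm_num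
    · by_cases hr : u.1 = v.1 <;> by_cases hc : u.2 = v.2 <;>
        by_cases hb : block u = block v
      · exact absurd (Prod.ext hr hc) huv
      · exact absurd (Prod.ext hr hc) huv
      · exact absurd (sudoku_row_unique block hT hmix v u hr hb) huv
      · simp [huv, hr, hc, hb]
      · exact absurd (sudoku_col_unique block hT hmix v u hc hb) huv
      · simp [huv, hr, hc, hb]
      · simp [huv, hr, hc, hb]
      · simp [huv, hr, hc, hb]
  have hSS : (Rm + Cm + Bm) * (Rm + Cm + Bm)
      = (m : ℝ) • (Rm + Cm + Bm) + (6 : ℝ) • Jm := by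
    simp only [add_mul, mul_add, h1, h2, h3, h4, h5, h6, h7, h8, h9]
    module
  have hJS : Jm * (Rm + Cm + Bm) = ((3 : ℝ) * m) • Jm := by
    simp only [mul_add, h10, h11, h12]
    module
  -- spectral argument
  intro μ hμ
  have hnu : ¬IsUnit (algebraMap ℝ (Matrix (Fin m × Fin m) (Fin m × Fin m) ℝ) μ - A) := spectrum.mem_iff.mp hμ
  have hdet : (algebraMap ℝ (Matrix (Fin m × Fin m) (Fin m × Fin m) ℝ) μ - A).det = 0 := by
    by_contra hd
    exact hnu ((Matrix.isUnit_iff_isUnit_det _).mpr (isUnit_iff_ne_zero.mpr hd))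
  obtain ⟨v, hv0, hv⟩ := (Matrix.exists_mulVec_eq_zero_iff).mpr hdet
  have hAv : A.mulVec v = μ • v := by
    have h' := hv
    rw [Matrix.sub_mulVec, Algebra.algebraMap_eq_smul_one, Matrix.smul_mulVec,
      Matrix.one_mulVec, sub_eq_zero] at h'
    exact h'.symm
  have hSv : (Rm + Cm + Bm).mulVec v = (μ + 3) • v := by
    have hS : Rm + Cm + Bm = A + (3 : ℝ) • 1 := by rw [hA']; abel
    rw [hS, Matrix.add_mulVec, hAv, Matrix.smul_mulVec, Matrix.one_mulVec, add_smul]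
  set w := Jm.mulVec v with hw
  have e1 : (6 : ℝ) • w = ((μ + 3) * (μ + 3) - m * (μ + 3)) • v := by
    have hmm : (Rm + Cm + Bm).mulVec ((Rm + Cm + Bm).mulVec v)
        = ((m : ℝ) • (Rm + Cm + Bm) + (6 : ℝ) • Jm).mulVec v := by
      rw [Matrix.mulVec_mulVec, hSS]
    rw [hSv, Matrix.mulVec_smul, hSv, Matrix.add_mulVec, Matrix.smul_mulVec,
      Matrix.smul_mulVec, hSv, ← hw] at hmm
    rw [smul_smul, smul_smul] at hmm
    have h' : (6 : ℝ) • w = ((μ + 3) * (μ + 3)) • v - ((m : ℝ) * (μ + 3)) • v :=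
      eq_sub_of_add_eq' hmm.symm
    rw [h', ← sub_smul]
  have e2 : ((μ + 3) - 3 * m) • w = 0 := by
    have hmm : Jm.mulVec ((Rm + Cm + Bm).mulVec v) = (((3 : ℝ) * m) • Jm).mulVec v := by
      rw [Matrix.mulVec_mulVec, hJS]
    rw [hSv, Matrix.mulVec_smul, Matrix.smul_mulVec, ← hw] at hmm
    rw [sub_smul, hmm, sub_self]
  have e3 : (((μ + 3) - 3 * m) * ((μ + 3) * (μ + 3) - m * (μ + 3))) • v = 0 := by
    rw [← smul_smul, ← e1, smul_smul, mul_comm, ← smul_smul, e2, smul_zero]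
  obtain ⟨i, hi⟩ := Function.ne_iff.mp hv0
  have hscal : ((μ + 3) - 3 * m) * ((μ + 3) * (μ + 3) - m * (μ + 3)) = 0 := by
    have := congrFun e3 i
    simp only [Pi.smul_apply, smul_eq_mul, Pi.zero_apply] at this
    rcases mul_eq_zero.mp this with h | h
    · exact h
    · exact absurd h hi
  have hfac : ((μ + 3) - 3 * m) * ((μ + 3) * ((μ + 3) - m)) = 0 := by
    rw [← hscal]; ring
  rcases mul_eq_zero.mp hfac with h | h
  · exact ⟨3 * (m : ℤ) - 3, by push_cast; linarith⟩
  · rcases mul_eq_zero.mp h with h' | h'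
    · exact ⟨-3, by push_cast; linarith⟩
    · exact ⟨(m : ℤ) - 3, by push_cast; linarith⟩
end

section
/- Let x be an eigenvector of L_V with eigenvalue λ, let y be an eigenvector of J_k (the k×k all-ones matrix) with eigenvalue α, and let z be a nonzero vector with J_k z = 0. Then x ⊗ y ⊗ z is an eigenvector of Â = L_B⊗J_{k^2} + L_H⊗(I_k⊗J_k) + L_V⊗(J_k⊗I_k) + I_{n^2}⊗(J_{k^2}−I_{k^2}) with eigenvalue λα − 1. -/
open Kronecker

/-- The `k × k` all-ones matrix. -/
def Jmat (k : ℕ) : Matrix (Fin k) (Fin k) ℝ := Matrix.of fun _ _ => 1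

/-- The adjacency matrix of the k-fold blow-up:
`Â = L_B⊗J_{k²} + L_H⊗(I_k⊗J_k) + L_V⊗(J_k⊗I_k) + I_{n²}⊗(J_{k²}−I_{k²})`. -/
def Ahat (n k : ℕ) (LB LH LV : Matrix (Fin (n ^ 2)) (Fin (n ^ 2)) ℝ) :
    Matrix (Fin (n ^ 2) × (Fin k × Fin k)) (Fin (n ^ 2) × (Fin k × Fin k)) ℝ :=
  LB ⊗ₖ (Jmat k ⊗ₖ Jmat k) + LH ⊗ₖ ((1 : Matrix (Fin k) (Fin k) ℝ) ⊗ₖ Jmat k)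
    + LV ⊗ₖ (Jmat k ⊗ₖ (1 : Matrix (Fin k) (Fin k) ℝ))
    + (1 : Matrix (Fin (n ^ 2)) (Fin (n ^ 2)) ℝ)
        ⊗ₖ (Jmat k ⊗ₖ Jmat k - (1 : Matrix (Fin k × Fin k) (Fin k × Fin k) ℝ))

lemma kron_mulVec {a b : Type*} [Fintype a] [Fintype b]
    (A : Matrix a a ℝ) (B : Matrix b b ℝ) (u : a → ℝ) (v : b → ℝ)
    (p : a × b) :
    (A ⊗ₖ B).mulVec (fun q => u q.1 * v q.2) p = A.mulVec u p.1 * B.mulVec v p.2 := by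
  simp only [Matrix.mulVec, dotProduct, Matrix.kroneckerMap_apply,
    Fintype.sum_prod_type, Finset.mul_sum, Finset.sum_mul]
  rw [Finset.sum_comm]
  apply Finset.sum_congr rfl; intro i _
  apply Finset.sum_congr rfl; intro j _
  ring

lemma kron3_mulVec {a b c : Type*} [Fintype a] [Fintype b] [Fintype c]
    (A : Matrix a a ℝ) (B : Matrix b b ℝ) (C : Matrix c c ℝ)
    (u : a → ℝ) (v : b → ℝ) (w : c → ℝ) (p : a × (b × c)) :
    (A ⊗ₖ (B ⊗ₖ C)).mulVec (fun q => u q.1 * v q.2.1 * w q.2.2) p =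
      A.mulVec u p.1 * (B.mulVec v p.2.1 * C.mulVec w p.2.2) := by
  have h : (fun q : a × (b × c) => u q.1 * v q.2.1 * w q.2.2)
      = fun q : a × (b × c) => u q.1 * ((fun r : b × c => v r.1 * w r.2) q.2) := by
    funext q; ring
  rw [h, kron_mulVec A (B ⊗ₖ C) u (fun r => v r.1 * w r.2) p, kron_mulVec]

/-- Lemma 1: if `x` is an eigenvector of `L_V` with eigenvalue `λ`, `y` an eigenvector of
`J_k` with eigenvalue `α`, and `z ≠ 0` with `J_k z = 0`, then `x ⊗ y ⊗ z` is an
eigenvector of `Â` with eigenvalue `λα − 1`. -/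
theorem blowup_eigenvector_from_LV (n k : ℕ)
    (LB LH LV : Matrix (Fin (n ^ 2)) (Fin (n ^ 2)) ℝ)
    (x : Fin (n ^ 2) → ℝ) (y z : Fin k → ℝ) (lam alpha : ℝ)
    (hx : x ≠ 0) (hxe : LV.mulVec x = lam • x)
    (hy : y ≠ 0) (hye : (Jmat k).mulVec y = alpha • y)
    (hz : z ≠ 0) (hze : (Jmat k).mulVec z = 0) :
    (fun p : Fin (n ^ 2) × (Fin k × Fin k) => x p.1 * y p.2.1 * z p.2.2) ≠ 0 ∧
    (Ahat n k LB LH LV).mulVec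
        (fun p : Fin (n ^ 2) × (Fin k × Fin k) => x p.1 * y p.2.1 * z p.2.2) =
      (lam * alpha - 1) •
        (fun p : Fin (n ^ 2) × (Fin k × Fin k) => x p.1 * y p.2.1 * z p.2.2) := by
  constructor
  · intro h
    obtain ⟨i, hi⟩ := Function.ne_iff.mp hx
    obtain ⟨j, hj⟩ := Function.ne_iff.mp hy
    obtain ⟨l, hl⟩ := Function.ne_iff.mp hz
    have := congrFun h (i, (j, l))
    exact mul_ne_zero (mul_ne_zero hi hj) hl this
  · funext p
    have hsub : ((1 : Matrix (Fin (n ^ 2)) (Fin (n ^ 2)) ℝ)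
        ⊗ₖ (Jmat k ⊗ₖ Jmat k - (1 : Matrix (Fin k × Fin k) (Fin k × Fin k) ℝ)))
        = (1 : Matrix (Fin (n ^ 2)) (Fin (n ^ 2)) ℝ) ⊗ₖ (Jmat k ⊗ₖ Jmat k)
          - (1 : Matrix (Fin (n ^ 2)) (Fin (n ^ 2)) ℝ)
              ⊗ₖ ((1 : Matrix (Fin k) (Fin k) ℝ) ⊗ₖ (1 : Matrix (Fin k) (Fin k) ℝ)) := by
      ext ⟨i, j⟩ ⟨i', j'⟩
      simp only [Matrix.kroneckerMap_apply, Matrix.sub_apply, Matrix.one_apply, Prod.ext_iff]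
      by_cases h : i = i' <;> by_cases h1 : j.1 = j'.1 <;> by_cases h2 : j.2 = j'.2 <;>
        simp [h, h1, h2, Matrix.one_apply]
    have hone : ((1 : Matrix (Fin (n ^ 2)) (Fin (n ^ 2)) ℝ)
        ⊗ₖ ((1 : Matrix (Fin k) (Fin k) ℝ) ⊗ₖ (1 : Matrix (Fin k) (Fin k) ℝ))) =
        1 ⊗ₖ ((1 : Matrix (Fin k) (Fin k) ℝ) ⊗ₖ (1 : Matrix (Fin k) (Fin k) ℝ)) := rfl
    simp only [Ahat, hsub, Matrix.add_mulVec, Matrix.sub_mulVec, Pi.add_apply, Pi.sub_apply]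
    rw [kron3_mulVec, kron3_mulVec, kron3_mulVec, kron3_mulVec, kron3_mulVec]
    simp only [hxe, hye, hze, Matrix.one_mulVec, Pi.smul_apply, Pi.zero_apply, smul_eq_mul]
    ring
end

section
/- With X_H = span{x⊗y⊗z : x eigenvector of L_H, y ∈ ker(J_k)\{0}, z eigenvector of J_k} and X_V = span{x⊗y⊗z : x eigenvector of L_V, y eigenvector of J_k, z ∈ ker(J_k)\{0}}, one has span(X_H) ∩ span(X_V) = ℝ^{n^2} ⊗ ker(J_k) ⊗ ker(J_k). -/
lemma Jmat_mulVec (k : ℕ) (y : Fin k → ℝ) :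
    (Jmat k).mulVec y = fun _ => ∑ j, y j := by
  funext i
  simp [Jmat, Matrix.mulVec, dotProduct]

lemma sum_eq_zero_of_Jmat (k : ℕ) (y : Fin k → ℝ) (h : (Jmat k).mulVec y = 0) :
    ∑ j, y j = 0 := by
  rcases isEmpty_or_nonempty (Fin k) with he | he
  · simp
  · obtain ⟨i⟩ := he
    have := congrFun h i
    rw [Jmat_mulVec] at this
    simpa using this

lemma Jmat_mulVec_of_sum (k : ℕ) (y : Fin k → ℝ) (h : ∑ j, y j = 0) :
    (Jmat k).mulVec y = 0 := by
  rw [Jmat_mulVec]; funext i; simpa using h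

/-- submodule of `w` whose "row sums" (over the middle index) vanish -/
def rowSub (n k : ℕ) : Submodule ℝ (Fin (n ^ 2) × (Fin k × Fin k) → ℝ) where
  carrier := {w | ∀ i l, ∑ j, w (i, (j, l)) = 0}
  add_mem' := by
    intro a b ha hb i l
    simp [Finset.sum_add_distrib, ha i l, hb i l]
  zero_mem' := by intro i l; simp
  smul_mem' := by
    intro c a ha i l
    simp [← Finset.mul_sum, ha i l]

/-- submodule of `w` whose "column sums" (over the last index) vanish -/
def colSub (n k : ℕ) : Submodule ℝ (Fin (n ^ 2) × (Fin k × Fin k) → ℝ) where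
  carrier := {w | ∀ i j, ∑ l, w (i, (j, l)) = 0}
  add_mem' := by
    intro a b ha hb i j
    simp [Finset.sum_add_distrib, ha i j, hb i j]
  zero_mem' := by intro i j; simp
  smul_mem' := by
    intro c a ha i j
    simp [← Finset.mul_sum, ha i j]

lemma helper_sum {k : ℕ} (a t : Fin k) (f : Fin k → ℝ) (hf : ∑ c, f c = 0) :
    ∑ c, f c * ((if a = c then (1:ℝ) else 0) - (if a = t then 1 else 0)) = f a := by
  by_cases h : a = t
  · subst h
    simp [mul_sub, Finset.sum_sub_distrib, mul_ite, Finset.sum_ite_eq, hf]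
  · simp [mul_sub, Finset.sum_sub_distrib, mul_ite, Finset.sum_ite_eq, h]

lemma pick_sum {m : ℕ} (i : Fin m) (f : Fin m → ℝ) (A : ℝ) :
    ∑ x, f x * ((if i = x then (1:ℝ) else 0) * A) = f i * A := by
  simp only [ite_mul, one_mul, zero_mul, mul_ite, mul_zero]
  rw [Finset.sum_ite_eq]
  simp

lemma inner_helper_sum {k : ℕ} (b t : Fin k) (A : ℝ) (f : Fin k → ℝ) (hf : ∑ d, f d = 0) :
    ∑ d, f d * (A * ((if b = d then (1:ℝ) else 0) - (if b = t then 1 else 0)))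
      = f b * A := by
  have h : ∀ d : Fin k,
      f d * (A * ((if b = d then (1:ℝ) else 0) - (if b = t then 1 else 0)))
        = (f d * ((if b = d then (1:ℝ) else 0) - (if b = t then 1 else 0))) * A :=
    fun d => by ring
  simp only [h, ← Finset.sum_mul, helper_sum b t f hf]

lemma point_eq (n k : ℕ) (t : Fin k) (w : Fin (n ^ 2) × (Fin k × Fin k) → ℝ)
    (h1 : ∀ i l, ∑ j, w (i, (j, l)) = 0)
    (h2 : ∀ i j, ∑ l, w (i, (j, l)) = 0)
    (i : Fin (n ^ 2)) (a b : Fin k) :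
    (∑ q : Fin (n ^ 2) × (Fin k × Fin k),
      w q * ((if i = q.1 then (1:ℝ) else 0) *
        (((if a = q.2.1 then (1:ℝ) else 0) - (if a = t then 1 else 0)) *
         ((if b = q.2.2 then (1:ℝ) else 0) - (if b = t then 1 else 0)))))
      = w (i, (a, b)) := by
  rw [Fintype.sum_prod_type, Finset.sum_comm]
  refine Eq.trans (Finset.sum_congr rfl fun x _ =>
    pick_sum i (fun x1 => w (x1, x))
      (((if a = x.1 then (1:ℝ) else 0) - (if a = t then 1 else 0)) *
       ((if b = x.2 then (1:ℝ) else 0) - (if b = t then 1 else 0)))) ?_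
  rw [Fintype.sum_prod_type]
  refine Eq.trans (Finset.sum_congr rfl fun c _ =>
    inner_helper_sum b t ((if a = c then (1:ℝ) else 0) - (if a = t then 1 else 0))
      (fun d => w (i, (c, d))) (h2 i c)) ?_
  exact helper_sum a t (fun c => w (i, (c, b))) (h1 i b)

/-- Any vector with vanishing row and column sums lies in the span of the
elementary tensors `e ⊗ y ⊗ z` with `y, z ∈ ker J`. -/
lemma mem_RHS_of_sums (n k : ℕ) (w : Fin (n ^ 2) × (Fin k × Fin k) → ℝ)
    (h1 : ∀ i l, ∑ j, w (i, (j, l)) = 0)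
    (h2 : ∀ i j, ∑ l, w (i, (j, l)) = 0) :
    w ∈ Submodule.span ℝ
        {w : Fin (n ^ 2) × (Fin k × Fin k) → ℝ |
          ∃ (x : Fin (n ^ 2) → ℝ) (y z : Fin k → ℝ),
            (Jmat k).mulVec y = 0 ∧ (Jmat k).mulVec z = 0 ∧
            w = fun p => x p.1 * y p.2.1 * z p.2.2} := by
  rcases Nat.eq_zero_or_pos k with hk | hk
  · subst hk
    have : w = 0 := by funext p; exact p.2.1.elim0
    rw [this]; exact Submodule.zero_mem _
  · set t : Fin k := ⟨0, hk⟩ with ht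
    set g : (Fin (n ^ 2) × (Fin k × Fin k)) → (Fin (n ^ 2) × (Fin k × Fin k) → ℝ) :=
      fun q p => (if p.1 = q.1 then (1:ℝ) else 0) *
        (((if p.2.1 = q.2.1 then (1:ℝ) else 0) - (if p.2.1 = t then 1 else 0)) *
         ((if p.2.2 = q.2.2 then (1:ℝ) else 0) - (if p.2.2 = t then 1 else 0))) with hg
    have hgmem : ∀ q, g q ∈
        {w : Fin (n ^ 2) × (Fin k × Fin k) → ℝ |
          ∃ (x : Fin (n ^ 2) → ℝ) (y z : Fin k → ℝ),
            (Jmat k).mulVec y = 0 ∧ (Jmat k).mulVec z = 0 ∧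
            w = fun p => x p.1 * y p.2.1 * z p.2.2} := by
      intro q
      refine ⟨fun i => if i = q.1 then 1 else 0,
        fun j => (if j = q.2.1 then 1 else 0) - (if j = t then 1 else 0),
        fun j => (if j = q.2.2 then 1 else 0) - (if j = t then 1 else 0), ?_, ?_, ?_⟩
      · apply Jmat_mulVec_of_sum
        simp [Finset.sum_sub_distrib]
      · apply Jmat_mulVec_of_sum
        simp [Finset.sum_sub_distrib]
      · funext p; simp only [hg]; ring
    have hw : w = ∑ q, w q • g q := by
      funext p
      obtain ⟨i, a, b⟩ := p
      simp only [Finset.sum_apply, Pi.smul_apply, smul_eq_mul, hg]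
      exact (point_eq n k t w h1 h2 i a b).symm
    rw [hw]
    exact Submodule.sum_mem _ fun q _ =>
      Submodule.smul_mem _ _ (Submodule.subset_span (hgmem q))

/-- An arbitrary elementary tensor `x ⊗ y ⊗ z` lies in the span of any set containing
all the tensors `v ⊗ y ⊗ z` with `v` an eigenvector of a symmetric matrix `L`. -/
lemma tensor_mem_span (n k : ℕ) (L : Matrix (Fin (n ^ 2)) (Fin (n ^ 2)) ℝ)
    (hL : L.IsSymm) (S : Set (Fin (n ^ 2) × (Fin k × Fin k) → ℝ)) (y z : Fin k → ℝ)
    (hS : ∀ (v : Fin (n ^ 2) → ℝ) (μ : ℝ), v ≠ 0 → L.mulVec v = μ • v →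
      (fun p : Fin (n ^ 2) × (Fin k × Fin k) => v p.1 * y p.2.1 * z p.2.2) ∈ S)
    (x : Fin (n ^ 2) → ℝ) :
    (fun p : Fin (n ^ 2) × (Fin k × Fin k) => x p.1 * y p.2.1 * z p.2.2)
      ∈ Submodule.span ℝ S := by
  have hL' : L.IsHermitian := by
    rw [Matrix.IsHermitian, Matrix.conjTranspose_eq_transpose_of_trivial]
    exact hL
  set b := hL'.eigenvectorBasis with hb
  have hx := b.toBasis.sum_repr (WithLp.toLp 2 x)
  have hfun : (fun p : Fin (n ^ 2) × (Fin k × Fin k) => x p.1 * y p.2.1 * z p.2.2)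
      = ∑ i, b.toBasis.repr (WithLp.toLp 2 x) i •
          (fun p : Fin (n ^ 2) × (Fin k × Fin k) => (b i : Fin (n ^ 2) → ℝ) p.1 * y p.2.1 * z p.2.2) := by
    funext p
    have hxp : x p.1 = ∑ i, b.toBasis.repr (WithLp.toLp 2 x) i * (b i : Fin (n ^ 2) → ℝ) p.1 := by
      let e : (EuclideanSpace ℝ (Fin (n ^ 2))) →ₗ[ℝ] ℝ :=
        { toFun := fun v => v p.1, map_add' := fun _ _ => rfl, map_smul' := fun _ _ => rfl }
      have h2 := congrArg e hx
      rw [map_sum] at h2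
      simp only [map_smul, smul_eq_mul] at h2
      exact h2.symm
    simp only [Finset.sum_apply, Pi.smul_apply, smul_eq_mul, hxp, Finset.sum_mul]
    exact Finset.sum_congr rfl fun i _ => by ring
  rw [hfun]
  refine Submodule.sum_mem _ fun i _ => Submodule.smul_mem _ _ (Submodule.subset_span ?_)
  exact hS (b i) (hL'.eigenvalues i)
    (fun h => b.orthonormal.ne_zero i (by simpa using congrArg (WithLp.toLp 2) h))
    (hL'.mulVec_eigenvectorBasis i)

/-- With `X_H = {x⊗y⊗z : x eigenvector of L_H, y ∈ ker(J_k)\{0}, z eigenvector of J_k}` and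
`X_V = {x⊗y⊗z : x eigenvector of L_V, y eigenvector of J_k, z ∈ ker(J_k)\{0}}`, one has
`span(X_H) ∩ span(X_V) = ℝ^{n²} ⊗ ker(J_k) ⊗ ker(J_k)`. -/
theorem span_XH_inter_span_XV (n k : ℕ)
    (LH LV : Matrix (Fin (n ^ 2)) (Fin (n ^ 2)) ℝ)
    (hH : LH.IsSymm) (hV : LV.IsSymm) :
    Submodule.span ℝ
        {w : Fin (n ^ 2) × (Fin k × Fin k) → ℝ |
          ∃ (x : Fin (n ^ 2) → ℝ) (y z : Fin k → ℝ) (μ ν : ℝ),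
            x ≠ 0 ∧ LH.mulVec x = μ • x ∧
            y ≠ 0 ∧ (Jmat k).mulVec y = 0 ∧
            z ≠ 0 ∧ (Jmat k).mulVec z = ν • z ∧
            w = fun p => x p.1 * y p.2.1 * z p.2.2} ⊓
      Submodule.span ℝ
        {w : Fin (n ^ 2) × (Fin k × Fin k) → ℝ |
          ∃ (x : Fin (n ^ 2) → ℝ) (y z : Fin k → ℝ) (μ ν : ℝ),
            x ≠ 0 ∧ LV.mulVec x = μ • x ∧
            y ≠ 0 ∧ (Jmat k).mulVec y = ν • y ∧
            z ≠ 0 ∧ (Jmat k).mulVec z = 0 ∧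
            w = fun p => x p.1 * y p.2.1 * z p.2.2} =
    Submodule.span ℝ
        {w : Fin (n ^ 2) × (Fin k × Fin k) → ℝ |
          ∃ (x : Fin (n ^ 2) → ℝ) (y z : Fin k → ℝ),
            (Jmat k).mulVec y = 0 ∧ (Jmat k).mulVec z = 0 ∧
            w = fun p => x p.1 * y p.2.1 * z p.2.2} := by
  apply le_antisymm
  · -- span X_H ⊓ span X_V ≤ RHS
    intro w hw
    obtain ⟨hwH, hwV⟩ := hw
    -- span X_H ≤ rowSub
    have hrow : w ∈ rowSub n k := by
      refine Submodule.span_le.mpr ?_ hwH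
      rintro v ⟨x, y, z, μ, ν, hx0, hxe, hy0, hy, hz0, hze, rfl⟩
      intro i l
      have hsy : ∑ j, y j = 0 := sum_eq_zero_of_Jmat k y hy
      calc ∑ j, x i * y j * z l = (x i * z l) * ∑ j, y j := by
            rw [Finset.mul_sum]; exact Finset.sum_congr rfl fun _ _ => by ring
        _ = 0 := by rw [hsy, mul_zero]
    have hcol : w ∈ colSub n k := by
      refine Submodule.span_le.mpr ?_ hwV
      rintro v ⟨x, y, z, μ, ν, hx0, hxe, hy0, hye, hz0, hz, rfl⟩
      intro i j
      have hsz : ∑ l, z l = 0 := sum_eq_zero_of_Jmat k z hz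
      calc ∑ l, x i * y j * z l = (x i * y j) * ∑ l, z l := by
            rw [Finset.mul_sum]
        _ = 0 := by rw [hsz, mul_zero]
    exact mem_RHS_of_sums n k w hrow hcol
  · -- RHS ≤ span X_H ⊓ span X_V
    refine Submodule.span_le.mpr ?_
    rintro w ⟨x, y, z, hy, hz, rfl⟩
    by_cases hy0 : y = 0
    · subst hy0
      have : (fun p : Fin (n ^ 2) × (Fin k × Fin k) => x p.1 * (0 : Fin k → ℝ) p.2.1 * z p.2.2)
          = 0 := by funext p; simp
      rw [this]
      exact Submodule.zero_mem _
    by_cases hz0 : z = 0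
    · subst hz0
      have : (fun p : Fin (n ^ 2) × (Fin k × Fin k) => x p.1 * y p.2.1 * (0 : Fin k → ℝ) p.2.2)
          = 0 := by funext p; simp
      rw [this]
      exact Submodule.zero_mem _
    constructor
    · refine tensor_mem_span n k LH hH _ y z ?_ x
      intro v μ hv0 hve
      exact ⟨v, y, z, μ, 0, hv0, hve, hy0, hy, hz0, by rw [zero_smul]; exact hz, rfl⟩
    · refine tensor_mem_span n k LV hV _ y z ?_ x
      intro v μ hv0 hve
      exact ⟨v, y, z, μ, 0, hv0, hve, hy0, by rw [zero_smul]; exact hy, hz0, hz, rfl⟩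
end

section
/- Let B_V, B_H be eigenbases of the symmetric matrices L_V, L_H respectively, B_M an eigenbasis of k^2 L_B + k L_V + k L_H, E the standard basis of ℝ^{n^2}, and K a basis of ker(J_k). Then the union of the four sets {x⊗1_k⊗y : x∈B_V, y∈K}, {x⊗y⊗1_k : x∈B_H, y∈K}, {x⊗y⊗z : x∈E, y,z∈K}, {x⊗1_{k^2} : x∈B_M} is a set of k^2 n^2 linearly independent eigenvectors of Â = L_B⊗J_{k^2} + L_H⊗(I_k⊗J_k) + L_V⊗(J_k⊗I_k) + I_{n^2}⊗(J_{k^2}−I_{k^2}), i.e., it is an eigenbasis of Â. -/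
open Kronecker

/-- The combined family `X_V ∪ X_H ∪ X_E ∪ X_M` of vectors built from eigenbases of
`L_V`, `L_H`, `k²L_B + kL_H + kL_V`, the standard basis, and a basis of `ker(J_k)`. -/
def blowupFamily (n k : ℕ)
    (BV BH BM : Fin (n ^ 2) → Fin (n ^ 2) → ℝ) (K : Fin (k - 1) → Fin k → ℝ) :
    (Fin (n ^ 2) × Fin (k - 1)) ⊕ ((Fin (n ^ 2) × Fin (k - 1)) ⊕
      ((Fin (n ^ 2) × (Fin (k - 1) × Fin (k - 1))) ⊕ Fin (n ^ 2))) →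
      (Fin (n ^ 2) × (Fin k × Fin k) → ℝ) :=
  Sum.elim (fun a p => BV a.1 p.1 * K a.2 p.2.2)
    (Sum.elim (fun a p => BH a.1 p.1 * K a.2 p.2.1)
      (Sum.elim (fun a p => (Pi.single a.1 (1 : ℝ) : Fin (n ^ 2) → ℝ) p.1 * K a.2.1 p.2.1 * K a.2.2 p.2.2)
        (fun i p => BM i p.1)))

lemma kron_mulVec_apply {α β : Type*} [Fintype α] [Fintype β]
    (A : Matrix α α ℝ) (B : Matrix β β ℝ) (x : α → ℝ) (g : β → ℝ)
    (f : α × β → ℝ) (hf : ∀ q, f q = x q.1 * g q.2) (p : α × β) :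
    (A ⊗ₖ B).mulVec f p = A.mulVec x p.1 * B.mulVec g p.2 := by
  simp only [Matrix.mulVec, dotProduct, Matrix.kroneckerMap_apply,
    Fintype.sum_prod_type]
  rw [Finset.sum_mul_sum]
  refine Finset.sum_congr rfl fun a _ => Finset.sum_congr rfl fun b _ => ?_
  rw [hf]; ring

lemma J_mulVec_one (k : ℕ) :
    (Jmat k).mulVec (fun _ => 1) = fun _ => (k : ℝ) := by
  funext p; simp [Jmat, Matrix.mulVec, dotProduct]

/-- `mulVec` of the blowup adjacency matrix on a pure tensor, pointwise. -/
lemma Ahat_mulVec_apply (n k : ℕ) (LB LH LV : Matrix (Fin (n ^ 2)) (Fin (n ^ 2)) ℝ)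
    (x : Fin (n ^ 2) → ℝ) (u w : Fin k → ℝ)
    (f : Fin (n ^ 2) × (Fin k × Fin k) → ℝ)
    (hf : ∀ q, f q = x q.1 * (u q.2.1 * w q.2.2))
    (p : Fin (n ^ 2) × (Fin k × Fin k)) :
    (Ahat n k LB LH LV).mulVec f p =
    LB.mulVec x p.1 * ((Jmat k).mulVec u p.2.1 * (Jmat k).mulVec w p.2.2)
      + LH.mulVec x p.1 * (u p.2.1 * (Jmat k).mulVec w p.2.2)
      + LV.mulVec x p.1 * ((Jmat k).mulVec u p.2.1 * w p.2.2)
      + x p.1 * ((Jmat k).mulVec u p.2.1 * (Jmat k).mulVec w p.2.2 - u p.2.1 * w p.2.2) := by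
  have hg : ∀ q : Fin k × Fin k, (fun q : Fin k × Fin k => u q.1 * w q.2) q = u q.1 * w q.2 :=
    fun _ => rfl
  rw [Ahat]
  simp only [Matrix.add_mulVec, Pi.add_apply]
  rw [kron_mulVec_apply LB (Jmat k ⊗ₖ Jmat k) x (fun q => u q.1 * w q.2) f hf p,
    kron_mulVec_apply LH ((1 : Matrix (Fin k) (Fin k) ℝ) ⊗ₖ Jmat k) x
      (fun q => u q.1 * w q.2) f hf p,
    kron_mulVec_apply LV (Jmat k ⊗ₖ (1 : Matrix (Fin k) (Fin k) ℝ)) x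
      (fun q => u q.1 * w q.2) f hf p,
    kron_mulVec_apply (1 : Matrix (Fin (n ^ 2)) (Fin (n ^ 2)) ℝ)
      (Jmat k ⊗ₖ Jmat k - 1) x (fun q => u q.1 * w q.2) f hf p,
    kron_mulVec_apply (Jmat k) (Jmat k) u w (fun q => u q.1 * w q.2) hg,
    kron_mulVec_apply (1 : Matrix (Fin k) (Fin k) ℝ) (Jmat k) u w (fun q => u q.1 * w q.2) hg,
    kron_mulVec_apply (Jmat k) (1 : Matrix (Fin k) (Fin k) ℝ) u w (fun q => u q.1 * w q.2) hg,
    Matrix.sub_mulVec, Matrix.one_mulVec, Matrix.one_mulVec, Matrix.one_mulVec,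
    Pi.sub_apply,
    kron_mulVec_apply (Jmat k) (Jmat k) u w (fun q => u q.1 * w q.2) hg]
  rw [Matrix.one_mulVec]

/-- Tensoring with a fixed function on the right, as a linear map in the first slot. -/
def tensorL {α β : Type*} (g : β → ℝ) : (α → ℝ) →ₗ[ℝ] (α × β → ℝ) where
  toFun x := fun p => x p.1 * g p.2
  map_add' x y := by funext p; simp [add_mul]
  map_smul' c x := by funext p; simp [mul_assoc]

/-- Linear in the middle slot. -/
def tensorMid {α β γ : Type*} (x : α → ℝ) (w : γ → ℝ) : (β → ℝ) →ₗ[ℝ] (α × β × γ → ℝ) where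
  toFun u := fun p => x p.1 * (u p.2.1 * w p.2.2)
  map_add' u v := by funext p; simp; ring
  map_smul' c u := by funext p; simp; ring

/-- Linear in the last slot. -/
def tensorLast {α β γ : Type*} (x : α → ℝ) (u : β → ℝ) : (γ → ℝ) →ₗ[ℝ] (α × β × γ → ℝ) where
  toFun w := fun p => x p.1 * (u p.2.1 * w p.2.2)
  map_add' w v := by funext p; simp; ring
  map_smul' c w := by funext p; simp; ring

lemma span_map_mem {M N : Type*} [AddCommGroup M] [Module ℝ M] [AddCommGroup N] [Module ℝ N]
    (L : M →ₗ[ℝ] N) (s : Set M) (S : Submodule ℝ N) (x : M)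
    (hx : x ∈ Submodule.span ℝ s) (h : ∀ y ∈ s, L y ∈ S) : L x ∈ S := by
  have h1 : L x ∈ Submodule.map L (Submodule.span ℝ s) := Submodule.mem_map_of_mem hx
  rw [Submodule.map_span] at h1
  refine Submodule.span_le.2 ?_ h1
  rintro _ ⟨y, hy, rfl⟩; exact h y hy

lemma mem_spanK1 (k : ℕ) (hk : 0 < k) (K : Fin (k - 1) → Fin k → ℝ)
    (hKspan : Submodule.span ℝ (Set.range K) = LinearMap.ker (Jmat k).mulVecLin)
    (w : Fin k → ℝ) :
    w ∈ Submodule.span ℝ ({fun _ => (1:ℝ)} ∪ Set.range K) := by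
  have hkne : (k : ℝ) ≠ 0 := Nat.cast_ne_zero.2 hk.ne'
  set c : ℝ := (∑ j, w j) / k with hc
  have hker : (w - c • fun _ => (1:ℝ)) ∈ LinearMap.ker (Jmat k).mulVecLin := by
    rw [LinearMap.mem_ker]
    funext q
    simp only [Matrix.mulVecLin_apply, Matrix.mulVec, dotProduct, Jmat, Matrix.of_apply,
      Pi.sub_apply, Pi.smul_apply, smul_eq_mul, one_mul, Pi.zero_apply, mul_one,
      Finset.sum_sub_distrib, Finset.sum_const, Finset.card_univ, Fintype.card_fin, nsmul_eq_mul]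
    rw [hc]; field_simp; simp
  have h2 : (w - c • fun _ => (1:ℝ)) ∈ Submodule.span ℝ ({fun _ => (1:ℝ)} ∪ Set.range K) := by
    refine Submodule.span_mono Set.subset_union_right ?_
    rw [hKspan]; exact hker
  have h1 : (c • fun _ => (1:ℝ) : Fin k → ℝ) ∈
      Submodule.span ℝ ({fun _ => (1:ℝ)} ∪ Set.range K) :=
    Submodule.smul_mem _ c (Submodule.subset_span (Or.inl rfl))
  have := Submodule.add_mem _ h1 h2
  simpa using this

/-- Theorem: the union `X_V ∪ X_H ∪ X_E ∪ X_M` is a family of `k²n²` linearly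
independent eigenvectors of `Â`, i.e. an eigenbasis of the blow-up graph. -/
theorem blowup_eigenbasis (n k : ℕ) (hk : 0 < k)
    (LB LH LV : Matrix (Fin (n ^ 2)) (Fin (n ^ 2)) ℝ)
    (hBs : LB.IsSymm) (hHs : LH.IsSymm) (hVs : LV.IsSymm)
    (BV BH BM : Fin (n ^ 2) → Fin (n ^ 2) → ℝ)
    (hBV : LinearIndependent ℝ BV)
    (hBVe : ∀ i, ∃ μ : ℝ, LV.mulVec (BV i) = μ • BV i)
    (hBH : LinearIndependent ℝ BH)
    (hBHe : ∀ i, ∃ μ : ℝ, LH.mulVec (BH i) = μ • BH i)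
    (hBM : LinearIndependent ℝ BM)
    (hBMe : ∀ i, ∃ μ : ℝ,
      (((k : ℝ) ^ 2) • LB + (k : ℝ) • LH + (k : ℝ) • LV).mulVec (BM i) = μ • BM i)
    (K : Fin (k - 1) → Fin k → ℝ)
    (hK : LinearIndependent ℝ K)
    (hKker : ∀ i, (Jmat k).mulVec (K i) = 0)
    (hKspan : Submodule.span ℝ (Set.range K) = LinearMap.ker (Jmat k).mulVecLin) :
    LinearIndependent ℝ (blowupFamily n k BV BH BM K) ∧
    (∀ i, ∃ μ : ℝ, (Ahat n k LB LH LV).mulVec (blowupFamily n k BV BH BM K i) =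
      μ • blowupFamily n k BV BH BM K i) ∧
    Submodule.span ℝ (Set.range (blowupFamily n k BV BH BM K)) = ⊤ := by
  set F := blowupFamily n k BV BH BM K with hF
  set S := Submodule.span ℝ (Set.range F) with hS
  have memF : ∀ i, F i ∈ S := fun i => Submodule.subset_span ⟨i, rfl⟩
  have hfr : Module.finrank ℝ (Fin (n ^ 2) → ℝ) = n ^ 2 := by
    simp [Module.finrank_fintype_fun_eq_card]
  have hBVspan : Submodule.span ℝ (Set.range BV) = ⊤ :=
    hBV.span_eq_top_of_card_eq_finrank' (by simp [hfr])
  have hBHspan : Submodule.span ℝ (Set.range BH) = ⊤ :=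
    hBH.span_eq_top_of_card_eq_finrank' (by simp [hfr])
  have hBMspan : Submodule.span ℝ (Set.range BM) = ⊤ :=
    hBM.span_eq_top_of_card_eq_finrank' (by simp [hfr])
  -- The four types of generators
  have CMM : ∀ a : Fin (n ^ 2),
      (fun p : Fin (n ^ 2) × (Fin k × Fin k) =>
        (Pi.single a (1:ℝ) : Fin (n ^ 2) → ℝ) p.1 * ((1:ℝ) * (1:ℝ))) ∈ S := by
    intro a
    refine span_map_mem (tensorL (fun _ : Fin k × Fin k => (1:ℝ) * 1)) (Set.range BM) S
      (Pi.single a 1) (by rw [hBMspan]; trivial) ?_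
    rintro _ ⟨i, rfl⟩
    have : tensorL (α := Fin (n ^ 2)) (fun _ : Fin k × Fin k => (1:ℝ) * 1) (BM i) =
        F (Sum.inr (Sum.inr (Sum.inr i))) := by
      funext p; simp [tensorL, hF, blowupFamily]
    rw [this]; exact memF _
  have CMK : ∀ (a : Fin (n ^ 2)) (z : Fin (k - 1)),
      (fun p : Fin (n ^ 2) × (Fin k × Fin k) =>
        (Pi.single a (1:ℝ) : Fin (n ^ 2) → ℝ) p.1 * ((1:ℝ) * K z p.2.2)) ∈ S := by
    intro a z
    refine span_map_mem (tensorL (fun q : Fin k × Fin k => (1:ℝ) * K z q.2)) (Set.range BV) S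
      (Pi.single a 1) (by rw [hBVspan]; trivial) ?_
    rintro _ ⟨i, rfl⟩
    have : tensorL (α := Fin (n ^ 2)) (fun q : Fin k × Fin k => (1:ℝ) * K z q.2) (BV i) =
        F (Sum.inl (i, z)) := by
      funext p; simp [tensorL, hF, blowupFamily]
    rw [this]; exact memF _
  have CKM : ∀ (a : Fin (n ^ 2)) (y : Fin (k - 1)),
      (fun p : Fin (n ^ 2) × (Fin k × Fin k) =>
        (Pi.single a (1:ℝ) : Fin (n ^ 2) → ℝ) p.1 * (K y p.2.1 * (1:ℝ))) ∈ S := by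
    intro a y
    refine span_map_mem (tensorL (fun q : Fin k × Fin k => K y q.1 * (1:ℝ))) (Set.range BH) S
      (Pi.single a 1) (by rw [hBHspan]; trivial) ?_
    rintro _ ⟨i, rfl⟩
    have : tensorL (α := Fin (n ^ 2)) (fun q : Fin k × Fin k => K y q.1 * (1:ℝ)) (BH i) =
        F (Sum.inr (Sum.inl (i, y))) := by
      funext p; simp [tensorL, hF, blowupFamily]
    rw [this]; exact memF _
  have CKK : ∀ (a : Fin (n ^ 2)) (y z : Fin (k - 1)),
      (fun p : Fin (n ^ 2) × (Fin k × Fin k) =>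
        (Pi.single a (1:ℝ) : Fin (n ^ 2) → ℝ) p.1 * (K y p.2.1 * K z p.2.2)) ∈ S := by
    intro a y z
    have : (fun p : Fin (n ^ 2) × (Fin k × Fin k) =>
        (Pi.single a (1:ℝ) : Fin (n ^ 2) → ℝ) p.1 * (K y p.2.1 * K z p.2.2)) =
        F (Sum.inr (Sum.inr (Sum.inl (a, y, z)))) := by
      funext p; simp [hF, blowupFamily, mul_assoc]
    rw [this]; exact memF _
  set setK1 : Set (Fin k → ℝ) := {fun _ => (1:ℝ)} ∪ Set.range K with hsetK1
  have D1 : ∀ (a : Fin (n ^ 2)) (u : Fin k → ℝ), u ∈ setK1 →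
      ∀ w ∈ Submodule.span ℝ setK1,
      (fun p : Fin (n ^ 2) × (Fin k × Fin k) =>
        (Pi.single a (1:ℝ) : Fin (n ^ 2) → ℝ) p.1 * (u p.2.1 * w p.2.2)) ∈ S := by
    intro a u hu w hw
    refine span_map_mem (tensorLast (Pi.single a (1:ℝ)) u) setK1 S w hw ?_
    intro y hy
    rcases hu with hu | ⟨i, rfl⟩ <;> rcases hy with hy | ⟨j, rfl⟩
    · rw [Set.mem_singleton_iff] at hu hy; subst hu; subst hy; exact CMM a
    · rw [Set.mem_singleton_iff] at hu; subst hu; exact CMK a j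
    · rw [Set.mem_singleton_iff] at hy; subst hy; exact CKM a i
    · exact CKK a i j
  have D2 : ∀ (a : Fin (n ^ 2)), ∀ u ∈ Submodule.span ℝ setK1, ∀ w ∈ Submodule.span ℝ setK1,
      (fun p : Fin (n ^ 2) × (Fin k × Fin k) =>
        (Pi.single a (1:ℝ) : Fin (n ^ 2) → ℝ) p.1 * (u p.2.1 * w p.2.2)) ∈ S := by
    intro a u hu w hw
    exact span_map_mem (tensorMid (Pi.single a (1:ℝ)) w) setK1 S u hu
      (fun y hy => D1 a y hy w hw)
  have singles : ∀ q : Fin (n ^ 2) × (Fin k × Fin k), Pi.single q (1:ℝ) ∈ S := by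
    intro q
    have h := D2 q.1 (Pi.single q.2.1 1) (mem_spanK1 k hk K hKspan _)
      (Pi.single q.2.2 1) (mem_spanK1 k hk K hKspan _)
    have he : Pi.single q (1:ℝ) = fun p : Fin (n ^ 2) × (Fin k × Fin k) =>
        (Pi.single q.1 (1:ℝ) : Fin (n ^ 2) → ℝ) p.1 * ((Pi.single q.2.1 (1:ℝ) : Fin k → ℝ) p.2.1 * (Pi.single q.2.2 (1:ℝ) : Fin k → ℝ) p.2.2) := by
      funext p
      rw [Pi.single_apply, Pi.single_apply, Pi.single_apply, Pi.single_apply]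
      by_cases h1 : p.1 = q.1 <;> by_cases h2 : p.2.1 = q.2.1 <;> by_cases h3 : p.2.2 = q.2.2 <;>
        simp [Prod.ext_iff, h1, h2, h3]
    rw [he]; exact h
  have hspan : S = ⊤ := by
    rw [eq_top_iff]
    intro v _
    rw [← Finset.univ_sum_single v]
    refine Submodule.sum_mem _ fun q _ => ?_
    have : Pi.single q (v q) = v q • (Pi.single q (1:ℝ) : Fin (n ^ 2) × (Fin k × Fin k) → ℝ) := by
      funext j; simp [Pi.single_apply, Pi.smul_apply]
    rw [this]
    exact Submodule.smul_mem _ _ (singles q)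
  have hcard : Fintype.card ((Fin (n ^ 2) × Fin (k - 1)) ⊕ ((Fin (n ^ 2) × Fin (k - 1)) ⊕
      ((Fin (n ^ 2) × (Fin (k - 1) × Fin (k - 1))) ⊕ Fin (n ^ 2)))) =
      Module.finrank ℝ (Fin (n ^ 2) × (Fin k × Fin k) → ℝ) := by
    obtain ⟨m, rfl⟩ : ∃ m, k = m + 1 := ⟨k - 1, (Nat.succ_pred_eq_of_pos hk).symm⟩
    simp [Module.finrank_fintype_fun_eq_card, Nat.add_sub_cancel]
    ring
  refine ⟨linearIndependent_of_top_le_span_of_card_eq_finrank hspan.ge hcard, ?_, hspan⟩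
  rintro (⟨a, z⟩ | (⟨a, y⟩ | (⟨a, y, z⟩ | i)))
  · obtain ⟨μ, hμ⟩ := hBVe a
    refine ⟨k * μ - 1, ?_⟩
    funext p
    have hf : ∀ q, F (Sum.inl (a, z)) q =
        BV a q.1 * ((fun _ => (1:ℝ)) q.2.1 * K z q.2.2) := by
      intro q; simp [hF, blowupFamily]
    rw [Ahat_mulVec_apply n k LB LH LV (BV a) (fun _ => 1) (K z) _ hf p]
    have h1 := congrFun (J_mulVec_one k) p.2.1
    have h2 := congrFun (hKker z) p.2.2
    have h3 := congrFun hμ p.1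
    simp only [Pi.zero_apply] at h2
    simp only [Pi.smul_apply, smul_eq_mul] at h3
    rw [h1, h2, h3]
    simp only [hF, blowupFamily, Sum.elim_inl, Pi.smul_apply, smul_eq_mul]
    ring
  · obtain ⟨μ, hμ⟩ := hBHe a
    refine ⟨k * μ - 1, ?_⟩
    funext p
    have hf : ∀ q, F (Sum.inr (Sum.inl (a, y))) q =
        BH a q.1 * (K y q.2.1 * (fun _ => (1:ℝ)) q.2.2) := by
      intro q; simp [hF, blowupFamily]
    rw [Ahat_mulVec_apply n k LB LH LV (BH a) (K y) (fun _ => 1) _ hf p]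
    have h1 := congrFun (J_mulVec_one k) p.2.2
    have h2 := congrFun (hKker y) p.2.1
    have h3 := congrFun hμ p.1
    simp only [Pi.zero_apply] at h2
    simp only [Pi.smul_apply, smul_eq_mul] at h3
    rw [h1, h2, h3]
    simp only [hF, blowupFamily, Sum.elim_inr, Sum.elim_inl, Pi.smul_apply, smul_eq_mul]
    ring
  · refine ⟨-1, ?_⟩
    funext p
    have hf : ∀ q, F (Sum.inr (Sum.inr (Sum.inl (a, y, z)))) q =
        (Pi.single a (1:ℝ) : Fin (n ^ 2) → ℝ) q.1 * (K y q.2.1 * K z q.2.2) := by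
      intro q; simp [hF, blowupFamily, mul_assoc]
    rw [Ahat_mulVec_apply n k LB LH LV (Pi.single a 1) (K y) (K z) _ hf p]
    have h2 := congrFun (hKker y) p.2.1
    have h2' := congrFun (hKker z) p.2.2
    simp only [Pi.zero_apply] at h2 h2'
    rw [h2, h2']
    simp only [hF, blowupFamily, Sum.elim_inr, Sum.elim_inl, Pi.smul_apply, smul_eq_mul]
    ring
  · obtain ⟨μ, hμ⟩ := hBMe i
    refine ⟨μ + k ^ 2 - 1, ?_⟩
    funext p
    have hf : ∀ q, F (Sum.inr (Sum.inr (Sum.inr i))) q =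
        BM i q.1 * ((fun _ => (1:ℝ)) q.2.1 * (fun _ => (1:ℝ)) q.2.2) := by
      intro q; simp [hF, blowupFamily]
    rw [Ahat_mulVec_apply n k LB LH LV (BM i) (fun _ => 1) (fun _ => 1) _ hf p]
    have h1 := congrFun (J_mulVec_one k) p.2.1
    have h1' := congrFun (J_mulVec_one k) p.2.2
    have h3 := congrFun hμ p.1
    simp only [Matrix.add_mulVec, Matrix.smul_mulVec, Pi.add_apply, Pi.smul_apply,
      smul_eq_mul] at h3
    rw [h1, h1']
    simp only [hF, blowupFamily, Sum.elim_inr, Pi.smul_apply, smul_eq_mul]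
    linear_combination h3
end

section
/- For the k-fold blow-up: if two cells i and j of the original puzzle lie in the same block, then every cell of the replacement square S_i is adjacent (same block) to every cell of S_j in the blown-up puzzle; consequently the blown-up adjacency matrix satisfies Â = L_B⊗J_{k^2} + L_H⊗(I_k⊗J_k) + L_V⊗(J_k⊗I_k) + I_{n^2}⊗(J_{k^2}−I_{k^2}). -/
open Kronecker

/-- For the k-fold blow-up: if two original cells lie in the same block, then all pairs of
distinct replacement cells are adjacent (same blow-up block); consequently the blow-up
adjacency matrix satisfies
`Â = L_B⊗J_{k²} + L_H⊗(I_k⊗J_k) + L_V⊗(J_k⊗I_k) + I_{n²}⊗(J_{k²}−I_{k²})`. -/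
theorem blowup_adjacency_formula (n k : ℕ)
    (block : Fin n × Fin n → Fin n)
    (hT : ∀ b : Fin n, (Finset.univ.filter fun c : Fin n × Fin n => block c = b).card = n)
    (LB LH LV : Matrix (Fin n × Fin n) (Fin n × Fin n) ℝ)
    (hB : ∀ u v : Fin n × Fin n,
      LB u v = if u ≠ v ∧ block u = block v then 1 else 0)
    (hH : ∀ u v : Fin n × Fin n,
      LH u v = if u.1 = v.1 ∧ block u ≠ block v then 1 else 0)
    (hV : ∀ u v : Fin n × Fin n,
      LV u v = if u.2 = v.2 ∧ block u ≠ block v then 1 else 0)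
    (Ahat : Matrix ((Fin n × Fin n) × (Fin k × Fin k))
      ((Fin n × Fin n) × (Fin k × Fin k)) ℝ)
    -- Â is the adjacency matrix of the blown-up puzzle: cell (i,(a,b)) lies in blow-up row
    -- (i.1, a), blow-up column (i.2, b) and blow-up block `block i`.
    (hAhat : ∀ u v : (Fin n × Fin n) × (Fin k × Fin k),
      Ahat u v = if u ≠ v ∧ ((u.1.1 = v.1.1 ∧ u.2.1 = v.2.1) ∨
        (u.1.2 = v.1.2 ∧ u.2.2 = v.2.2) ∨ block u.1 = block v.1) then 1 else 0) :
    (∀ u v : (Fin n × Fin n) × (Fin k × Fin k),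
      block u.1 = block v.1 → u ≠ v → Ahat u v = 1) ∧
    Ahat = LB ⊗ₖ (Jmat k ⊗ₖ Jmat k) + LH ⊗ₖ ((1 : Matrix (Fin k) (Fin k) ℝ) ⊗ₖ Jmat k)
      + LV ⊗ₖ (Jmat k ⊗ₖ (1 : Matrix (Fin k) (Fin k) ℝ))
      + (1 : Matrix (Fin n × Fin n) (Fin n × Fin n) ℝ)
          ⊗ₖ (Jmat k ⊗ₖ Jmat k - (1 : Matrix (Fin k × Fin k) (Fin k × Fin k) ℝ)) := by
  constructor
  · intro u v hb huv
    rw [hAhat]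
    simp [huv, hb]
  · ext ⟨i, a, b⟩ ⟨j, c, d⟩
    simp only [Matrix.add_apply, Matrix.kroneckerMap_apply, Matrix.sub_apply, Jmat,
      Matrix.of_apply, hAhat, hB, hH, hV, Matrix.one_apply, ne_eq]
    by_cases hij : i = j
    · subst hij
      by_cases hpq : (a, b) = (c, d)
      · rw [Prod.mk.injEq] at hpq
        obtain ⟨h1, h2⟩ := hpq
        subst h1; subst h2
        simp
      · have hne : ¬ ((i, (a, b)) = (i, (c, d))) := by
          intro h; exact hpq (congrArg Prod.snd h)
        simp [hne, hpq]
    · have hne : ((i, (a, b)) : (Fin n × Fin n) × Fin k × Fin k) ≠ (j, (c, d)) := by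
        intro h; exact hij (congrArg Prod.fst h)
      by_cases hbl : block i = block j
      · simp [hne, hbl, hij]
      · have h12 : ¬ (i.1 = j.1 ∧ i.2 = j.2) := fun ⟨h1, h2⟩ => hij (Prod.ext h1 h2)
        by_cases h1 : i.1 = j.1 <;> by_cases h2 : i.2 = j.2
        · exact absurd ⟨h1, h2⟩ h12
        all_goals by_cases hac : a = c <;> by_cases hbd : b = d <;>
          simp [hne, hbl, hij, h1, h2, hac, hbd]
end
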